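/- arXiv:2504.14842 — 6 statements merged into one kernel-verified Lean document; each statement's English description precedes it below -/
import Mathlib

section
/- Let R be a real number with 0 < R < 1. For each positive integer m, let n = 2^m and let r = r(m) be the least nonnegative integer such that \sum_{i=0}^{r} \binom{m}{i} \ge R \cdot 2^m. Then m - r(m) tends to infinity as m tends to infinity, and consequently 2^{m - r(m)} tends to infinity as m tends to infinity. -/
/-!
For fixed `k`, each of the `k` top binomial coefficients `C(m, i)`, `m - k < i ≤ m`, equals
`C(m, m - i) ≤ (m + 1) ^ k`, so together they are polynomial in `m` and eventually below
`(1 - R) 2 ^ m`. The partial sum up to `m - k` then already reaches `R 2 ^ m`, so `r m ≤ m - k`.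
-/

open Filter Asymptotics Finset

lemma Nat.sum_Ico_choose_le (m k : ℕ) :
    ∑ i ∈ Ico (m - k + 1) (m + 1), m.choose i ≤ k * (m + 1) ^ k := by
  calc ∑ i ∈ Ico (m - k + 1) (m + 1), m.choose i
      ≤ #(Ico (m - k + 1) (m + 1)) • (m + 1) ^ k := by
        refine sum_le_card_nsmul _ _ _ fun i hi => ?_
        obtain ⟨hki, him⟩ := mem_Ico.1 hi
        rw [← Nat.choose_symm (Nat.le_of_lt_succ him)]
        calc m.choose (m - i) ≤ m ^ (m - i) := Nat.choose_le_pow m (m - i)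
          _ ≤ (m + 1) ^ (m - i) := Nat.pow_le_pow_left (Nat.le_succ m) _
          _ ≤ (m + 1) ^ k := Nat.pow_le_pow_right m.succ_pos (by omega)
    _ ≤ k * (m + 1) ^ k := by
        rw [smul_eq_mul, Nat.card_Ico]
        exact Nat.mul_le_mul_right _ (by omega)

lemma isLittleO_sum_Ico_choose_two_pow (k : ℕ) :
    (fun m : ℕ => ∑ i ∈ Ico (m - k + 1) (m + 1), (m.choose i : ℝ)) =o[atTop]
      fun m => (2 : ℝ) ^ m := by
  have hpoly : (fun m : ℕ => ((m + 1 : ℕ) : ℝ) ^ k) =o[atTop] fun m => (2 : ℝ) ^ m := by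
    have h := (isLittleO_pow_const_const_pow_of_one_lt (R := ℝ) k one_lt_two).comp_tendsto
      (tendsto_add_atTop_nat 1)
    refine h.trans_isBigO (IsBigO.of_bound 2 (Eventually.of_forall fun m => ?_))
    simp [pow_succ, mul_comm]
  refine (IsBigO.of_bound k (Eventually.of_forall fun m => ?_)).trans_isLittleO hpoly
  rw [Real.norm_of_nonneg (by positivity), Real.norm_of_nonneg (by positivity)]
  exact_mod_cast Nat.sum_Ico_choose_le m k

lemma sum_range_choose_add_sum_Ico_choose (m k : ℕ) :
    ∑ i ∈ range (m - k + 1), (m.choose i : ℝ) +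
      ∑ i ∈ Ico (m - k + 1) (m + 1), (m.choose i : ℝ) = 2 ^ m := by
  rw [sum_range_add_sum_Ico _ (by omega)]
  exact_mod_cast Nat.sum_range_choose m

theorem rm_min_distance_tendsto_atTop_general
    (R : ℝ) (hR1 : R < 1) (r : ℕ → ℕ)
    (hr : ∀ m : ℕ, 0 < m →
      IsLeast {k : ℕ | R * 2 ^ m ≤ ∑ i ∈ Finset.range (k + 1), (m.choose i : ℝ)} (r m)) :
    Filter.Tendsto (fun m : ℕ => m - r m) Filter.atTop Filter.atTop ∧
    Filter.Tendsto (fun m : ℕ => 2 ^ (m - r m)) Filter.atTop Filter.atTop := by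
  have hgap : Tendsto (fun m : ℕ => m - r m) atTop atTop := by
    refine tendsto_atTop.2 fun k => ?_
    filter_upwards [(isLittleO_sum_Ico_choose_two_pow k).bound (sub_pos.2 hR1),
      eventually_ge_atTop k, eventually_ge_atTop 1] with m htail hkm hm
    rw [Real.norm_of_nonneg (by positivity), Real.norm_of_nonneg (by positivity)] at htail
    have hmem : R * 2 ^ m ≤ ∑ i ∈ range (m - k + 1), (m.choose i : ℝ) := by
      linarith [sum_range_choose_add_sum_Ico_choose m k]
    have := (hr m hm).2 hmem
    omega
  exact ⟨hgap, (tendsto_pow_atTop_atTop_of_one_lt one_lt_two).comp hgap⟩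

/-- Let `0 < R < 1`. For each positive integer `m`, let `n = 2^m` and let
`r m` be the least nonnegative integer such that `∑_{i=0}^{r} C(m,i) ≥ R * 2^m`.
Then `m - r m → ∞` and hence `2^(m - r m) → ∞` as `m → ∞`. -/
theorem rm_min_distance_tendsto_atTop
    (R : ℝ) (hR0 : 0 < R) (hR1 : R < 1) (r : ℕ → ℕ)
    (hr : ∀ m : ℕ, 0 < m →
      IsLeast {k : ℕ | R * 2 ^ m ≤ ∑ i ∈ Finset.range (k + 1), (m.choose i : ℝ)} (r m)) :
    Filter.Tendsto (fun m : ℕ => m - r m) Filter.atTop Filter.atTop ∧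
    Filter.Tendsto (fun m : ℕ => 2 ^ (m - r m)) Filter.atTop Filter.atTop :=
  rm_min_distance_tendsto_atTop_general R hR1 r hr
end

section
/- Let m and r be integers with 0 \le r \le m. Over the field F_2 with two elements, consider the space of functions from (Fin m \to F_2) to F_2. For S \subseteq Fin m let e_S denote the monomial function v \mapsto \prod_{i \in S} v_i, and for an r-element subset S \subseteq Fin m and an assignment a : S \to F_2 let D_{S,a} denote the disjunctive-normal-form function v \mapsto \prod_{i \in S} (v_i + a_i + 1), i.e. the indicator function of the set {v : v_i = a_i for all i \in S}. Then the F_2-linear span of {e_S : S \subseteq Fin m, |S| \le r} equals the F_2-linear span of {D_{S,a} : S \subseteq Fin m, |S| = r, a : S \to F_2}. -/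
/-!
Every degree-`r` disjunctive normal form expands, by distributivity, into monomials of degree
at most `r`. Conversely, in characteristic two the two literals `x` and `x + 1` sum to `1`, so a
DNF on `S` splits into the two DNFs on `insert j S` that fix the `j`-th variable; iterating, any
DNF on `S` lies in the span of the DNFs on any superset of `S`. A monomial `e_S` is the DNF on
`S` with all signs `1`, and `S` extends to an `r`-element set.
-/

open Finset

namespace ReedMuller

variable {ι R : Type*}

section CommRing

variable [CommRing R]

def monomial (S : Finset ι) : (ι → R) → R := fun v => ∏ i ∈ S, v i

def dnf (S : Finset ι) (a : ι → R) : (ι → R) → R := fun v => ∏ i ∈ S, (v i + a i + 1)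

variable (R) in
def monomialsOfCardLE (r : ℕ) : Set ((ι → R) → R) :=
  {f | ∃ S : Finset ι, S.card ≤ r ∧ f = monomial S}

variable (R) in
def dnfsOfCard (r : ℕ) : Set ((ι → R) → R) :=
  {f | ∃ (S : Finset ι) (a : ι → R), S.card = r ∧ f = dnf S a}

theorem dnf_eq_sum_monomial [DecidableEq ι] (S : Finset ι) (a : ι → R) :
    dnf S a = ∑ t ∈ S.powerset, (∏ i ∈ S \ t, (a i + 1)) • monomial t := by
  funext v
  simp only [dnf, monomial, Finset.sum_apply, Pi.smul_apply, smul_eq_mul, add_assoc, prod_add]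
  exact sum_congr rfl fun t _ => mul_comm _ _

theorem dnf_mem_span_monomialsOfCardLE {r : ℕ} {S : Finset ι} (hS : S.card ≤ r) (a : ι → R) :
    dnf S a ∈ Submodule.span R (monomialsOfCardLE R r) := by
  classical
  rw [dnf_eq_sum_monomial]
  refine Submodule.sum_mem _ fun t ht => Submodule.smul_mem _ _ (Submodule.subset_span ?_)
  exact ⟨t, (card_le_card (mem_powerset.mp ht)).trans hS, rfl⟩

end CommRing

section CharTwo

variable [CommRing R] [CharP R 2]

theorem monomial_eq_dnf_one (S : Finset ι) : (monomial S : (ι → R) → R) = dnf S 1 := by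
  funext v
  simp [monomial, dnf, add_assoc, CharTwo.add_self_eq_zero]

variable [DecidableEq ι]

theorem dnf_eq_dnf_insert_add_dnf_insert {S : Finset ι} {j : ι} (hj : j ∉ S) (a : ι → R) :
    dnf S a =
      dnf (insert j S) (Function.update a j 1) + dnf (insert j S) (Function.update a j 0) := by
  funext v
  have hS : ∀ b : R, ∏ i ∈ S, (v i + Function.update a j b i + 1) = dnf S a v := fun b =>
    prod_congr rfl fun i hi => by rw [Function.update_of_ne (ne_of_mem_of_not_mem hi hj)]
  have literals_sum : v j + 1 + 1 + (v j + 0 + 1) = 1 := by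
    linear_combination (v j + 1) * CharTwo.two_eq_zero (R := R)
  simp only [dnf, Pi.add_apply, prod_insert hj, Function.update_self, hS, ← add_mul,
    literals_sum, one_mul]

theorem dnf_mem_span_dnf_union {U S : Finset ι} (hUS : Disjoint U S) (a : ι → R) :
    dnf S a ∈ Submodule.span R {f | ∃ b : ι → R, f = dnf (U ∪ S) b} := by
  induction U using Finset.induction_on generalizing S a with
  | empty => exact Submodule.subset_span ⟨a, by rw [empty_union]⟩
  | insert j U hjU ih =>
    rw [disjoint_insert_left] at hUS
    have hU : Disjoint U (insert j S) := disjoint_insert_right.2 ⟨hjU, hUS.2⟩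
    rw [insert_union, ← union_insert, dnf_eq_dnf_insert_add_dnf_insert hUS.1]
    exact Submodule.add_mem _ (ih hU _) (ih hU _)

theorem monomial_mem_span_dnfsOfCard [Fintype ι] {r : ℕ} (hr : r ≤ Fintype.card ι)
    {S : Finset ι} (hS : S.card ≤ r) :
    monomial S ∈ Submodule.span R (dnfsOfCard R r) := by
  obtain ⟨T, hST, hT⟩ := exists_superset_card_eq hS (by simpa using hr)
  have hdnf := dnf_mem_span_dnf_union (R := R) (sdiff_disjoint (t := T) (s := S)) 1
  rw [sdiff_union_of_subset hST] at hdnf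
  rw [monomial_eq_dnf_one]
  refine Submodule.span_mono ?_ hdnf
  rintro f ⟨b, rfl⟩
  exact ⟨T, b, hT, rfl⟩

theorem span_monomialsOfCardLE_eq_span_dnfsOfCard [Fintype ι] {r : ℕ}
    (hr : r ≤ Fintype.card ι) :
    Submodule.span R (monomialsOfCardLE R r : Set ((ι → R) → R)) =
      Submodule.span R (dnfsOfCard R r) := by
  apply le_antisymm <;> rw [Submodule.span_le]
  · rintro f ⟨S, hS, rfl⟩
    exact monomial_mem_span_dnfsOfCard hr hS
  · rintro f ⟨S, a, hS, rfl⟩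
    exact dnf_mem_span_monomialsOfCardLE hS.le a

end CharTwo

end ReedMuller

/-- For `0 ≤ r ≤ m`, over `F₂`, the span of the monomial functions
`e_S(v) = ∏_{i ∈ S} v i` with `|S| ≤ r` equals the span of the disjunctive normal forms
`D_{S,a}(v) = ∏_{i ∈ S} (v i + a i + 1)` with `|S| = r`. -/
theorem rm_span_monomials_eq_span_dnf (m r : ℕ) (hr : r ≤ m) :
    Submodule.span (ZMod 2)
      {f : (Fin m → ZMod 2) → ZMod 2 |
        ∃ S : Finset (Fin m), S.card ≤ r ∧ f = fun v => ∏ i ∈ S, v i} =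
    Submodule.span (ZMod 2)
      {f : (Fin m → ZMod 2) → ZMod 2 |
        ∃ (S : Finset (Fin m)) (a : Fin m → ZMod 2), S.card = r ∧
          f = fun v => ∏ i ∈ S, (v i + a i + 1)} :=
  ReedMuller.span_monomialsOfCardLE_eq_span_dnfsOfCard (by simpa using hr)
end

section
/- Let m and r be integers with 0 \le r \le m, and let S \subseteq Fin m with |S| = t < r. Over F_2, the monomial function e_S : v \mapsto \prod_{i \in S} v_i (a function from (Fin m \to F_2) to F_2) lies in the F_2-linear span of the functions D_{T,a} : v \mapsto \prod_{i \in T} (v_i + a_i + 1), where T ranges over r-element subsets of Fin m and a ranges over assignments T \to F_2. -/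
/-!
Extend `S` to a set `T` of size `r`. For `i ∈ T \ S` we have `(v i + 0 + 1) + (v i + 1 + 1) = 1`
over `F₂`, so summing `D_{T,a}` over all `a` with `a = 1` on `S` and `a` free on `T \ S` expands the
product `∏_{i ∈ S} v i · ∏_{i ∈ T \ S} ((v i + 1) + v i) = e_S`.
-/

open Finset

theorem ZMod.sum_add_add_one_eq_one (x : ZMod 2) : ∑ b : ZMod 2, (x + b + 1) = 1 := by
  revert x
  decide

-- Outside `T` the assignment is pinned to `1`: leaving it free there would multiply the sum by `2 = 0`.
theorem prod_eq_sum_prod_add_add_one {ι : Type*} [Fintype ι] [DecidableEq ι] {S T : Finset ι}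
    (hST : S ⊆ T) (v : ι → ZMod 2) :
    ∏ i ∈ S, v i = ∑ a ∈ Fintype.piFinset (fun i => if i ∈ T \ S then univ else {1}),
      ∏ i ∈ T, (v i + a i + 1) := by
  calc ∏ i ∈ S, v i
      = ∏ i, ∑ b ∈ (if i ∈ T \ S then univ else {1}), if i ∈ T then v i + b + 1 else 1 := by
        rw [← Fintype.prod_ite_mem]
        refine Fintype.prod_congr _ _ fun i => ?_
        by_cases hS : i ∈ S
        · simp [hS, hST hS, add_assoc, CharTwo.add_self_eq_zero]
        by_cases hT : i ∈ T
        · simp [hS, hT, ZMod.sum_add_add_one_eq_one]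
        · simp [hS, hT]
    _ = _ := by
        rw [prod_univ_sum]
        simp only [Fintype.prod_ite_mem]

/-- For `0 ≤ r ≤ m` and `S ⊆ Fin m` with `|S| = t < r`, the monomial
`e_S(v) = ∏_{i ∈ S} v i` lies in the `F₂`-span of the disjunctive normal forms
`D_{T,a}(v) = ∏_{i ∈ T} (v i + a i + 1)` with `|T| = r`. -/
theorem monomial_mem_span_dnf (m r t : ℕ) (hr : r ≤ m)
    (S : Finset (Fin m)) (hS : S.card = t) (htr : t < r) :
    (fun v : Fin m → ZMod 2 => ∏ i ∈ S, v i) ∈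
      Submodule.span (ZMod 2)
        {f : (Fin m → ZMod 2) → ZMod 2 |
          ∃ (T : Finset (Fin m)) (a : Fin m → ZMod 2), T.card = r ∧
            f = fun v => ∏ i ∈ T, (v i + a i + 1)} := by
  obtain ⟨T, hST, hT⟩ : ∃ T, S ⊆ T ∧ T.card = r :=
    exists_superset_card_eq (by omega) (by simpa using hr)
  have hsum : (fun v : Fin m → ZMod 2 => ∏ i ∈ S, v i) =
      ∑ a ∈ Fintype.piFinset (fun i => if i ∈ T \ S then univ else {1}),
        fun v => ∏ i ∈ T, (v i + a i + 1) := by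
    funext v
    rw [Finset.sum_apply]
    exact prod_eq_sum_prod_add_add_one hST v
  rw [hsum]
  exact Submodule.sum_mem _ fun a _ => Submodule.subset_span ⟨T, a, hT, rfl⟩
end

section
/- Let M \ge 1 and 0 \le w \le 2M be integers, and fix a subset A of a 2M-element set X with |A| = M. Let N denote the number of w-element subsets S \subseteq X such that |S \cap A| is even. If w is even then 2N = \binom{2M}{w} + (-1)^{w/2} \binom{M}{w/2}, and if w is odd then 2N = \binom{2M}{w}. -/
/-!
Weight each element of `A` by `-1` and every other element by `1`. The signed count
`∑_{|S| = w} (-1)^{|S ∩ A|}` is the coefficient of `x^w` in `∏ᵢ (1 ± x) = (1 - x)^M (1 + x)^M`,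
i.e. in `(1 - x^2)^M`, which is `(-1)^{w/2} C(M, w/2)` for even `w` and `0` for odd `w`.
Adding the unsigned count `C(2M, w)` gives twice the number of `S` with `|S ∩ A|` even.
-/

open Finset Polynomial

theorem Finset.coeff_prod_one_add_C_mul_X {ι R : Type*} [CommSemiring R] (s : Finset ι)
    (f : ι → R) (k : ℕ) :
    (∏ i ∈ s, (1 + C (f i) * X)).coeff k = ∑ t ∈ s.powersetCard k, ∏ i ∈ t, f i := by
  simp_rw [prod_one_add, finsetSum_coeff, prod_mul_distrib, prod_const, ← map_prod,
    coeff_C_mul_X_pow, powersetCard_eq_filter, sum_filter, eq_comm]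

namespace Polynomial

variable {R : Type*} [CommRing R]

theorem coeff_one_sub_X_pow (n k : ℕ) :
    ((1 - X : R[X]) ^ n).coeff k = (-1) ^ k * n.choose k := by
  have h : (1 - X : R[X]) ^ n = ∏ _i ∈ range n, (1 + C (-1) * X) := by
    simp [sub_eq_add_neg]
  rw [h, coeff_prod_one_add_C_mul_X, sum_congr rfl fun t ht => by
    rw [prod_const, (mem_powersetCard.1 ht).2], sum_const, card_powersetCard, card_range,
    nsmul_eq_mul, mul_comm]

theorem coeff_one_sub_X_pow_mul_one_add_X_pow (n k : ℕ) :
    ((1 - X : R[X]) ^ n * (1 + X) ^ n).coeff k =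
      if Even k then ((-1) ^ (k / 2) * n.choose (k / 2) : R) else 0 := by
  have h : (1 - X : R[X]) ^ n * (1 + X) ^ n = expand R 2 ((1 - X) ^ n) := by
    rw [← mul_pow]
    simp only [map_pow, map_sub, map_one, expand_X]
    ring
  simp_rw [h, coeff_expand two_pos, coeff_one_sub_X_pow, even_iff_two_dvd]

end Polynomial

theorem two_mul_card_filter_even {α : Type*} (s : Finset α) (g : α → ℕ) :
    2 * (#{x ∈ s | Even (g x)} : ℤ) = #s + ∑ x ∈ s, (-1) ^ g x := by
  rw [card_filter, card_eq_sum_ones, Nat.cast_sum, Nat.cast_sum, mul_sum, ← sum_add_distrib]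
  refine sum_congr rfl fun x _ => ?_
  rcases Nat.even_or_odd (g x) with h | h <;> simp [h, h.neg_one_pow, Nat.not_even_iff_odd]

section SignedSubsetCount

variable {α R : Type*} [Fintype α] [DecidableEq α] [CommRing R]

theorem prod_one_add_ite_mem_mul_X (A : Finset α) :
    ∏ i, (1 + C (if i ∈ A then -1 else 1 : R) * X) = (1 - X) ^ #A * (1 + X) ^ #Aᶜ := by
  simp_rw [apply_ite C, apply_ite (fun c => 1 + c * X), prod_ite, filter_mem_eq_inter]
  simp [sub_eq_add_neg, filter_notMem_eq_sdiff, compl_eq_univ_sdiff]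

theorem sum_powersetCard_neg_one_pow_card_inter (A : Finset α) (k : ℕ) :
    ∑ S ∈ powersetCard k univ, (-1 : R) ^ #(S ∩ A) =
      ((1 - X) ^ #A * (1 + X) ^ #Aᶜ : R[X]).coeff k := by
  rw [← prod_one_add_ite_mem_mul_X, coeff_prod_one_add_C_mul_X]
  exact sum_congr rfl fun S _ => by rw [prod_ite_mem, prod_const]

end SignedSubsetCount

theorem even_intersection_count_general (M w : ℕ)
    (X : Type) [Fintype X] [DecidableEq X] (hX : Fintype.card X = 2 * M)
    (A : Finset X) (hA : A.card = M) :
    (Even w →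
      2 * (((Finset.powersetCard w (Finset.univ : Finset X)).filter
          fun S => Even (S ∩ A).card).card : ℤ) =
        ((2 * M).choose w : ℤ) + (-1) ^ (w / 2) * (M.choose (w / 2) : ℤ)) ∧
    (Odd w →
      2 * (((Finset.powersetCard w (Finset.univ : Finset X)).filter
          fun S => Even (S ∩ A).card).card : ℤ) =
        ((2 * M).choose w : ℤ)) := by
  have hAc : #Aᶜ = M := by rw [card_compl, hX, hA]; omega
  have key : 2 * (#{S ∈ powersetCard w univ | Even #(S ∩ A)} : ℤ) =
      (2 * M).choose w + if Even w then ((-1) ^ (w / 2) * M.choose (w / 2) : ℤ) else 0 := by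
    rw [two_mul_card_filter_even, sum_powersetCard_neg_one_pow_card_inter, hA, hAc,
      coeff_one_sub_X_pow_mul_one_add_X_pow, card_powersetCard, card_univ, hX]
  exact ⟨fun hw => by rw [key, if_pos hw],
    fun hw => by rw [key, if_neg (Nat.not_even_iff_odd.2 hw), add_zero]⟩

/-- Let `M ≥ 1`, `0 ≤ w ≤ 2M`, and let `A` be a subset of size `M` in a
`2M`-element set `X`. Let `N` be the number of `w`-element subsets `S ⊆ X` with `|S ∩ A|`
even. If `w` is even then `2N = C(2M, w) + (-1)^(w/2) C(M, w/2)`, and if `w` is odd then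
`2N = C(2M, w)`. -/
theorem even_intersection_count (M w : ℕ) (hM : 1 ≤ M) (hw : w ≤ 2 * M)
    (X : Type) [Fintype X] [DecidableEq X] (hX : Fintype.card X = 2 * M)
    (A : Finset X) (hA : A.card = M) :
    (Even w →
      2 * (((Finset.powersetCard w (Finset.univ : Finset X)).filter
          fun S => Even (S ∩ A).card).card : ℤ) =
        ((2 * M).choose w : ℤ) + (-1) ^ (w / 2) * (M.choose (w / 2) : ℤ)) ∧
    (Odd w →
      2 * (((Finset.powersetCard w (Finset.univ : Finset X)).filter
          fun S => Even (S ∩ A).card).card : ℤ) =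
        ((2 * M).choose w : ℤ)) :=
  even_intersection_count_general M w X hX A hA
end

section
/- Let R be a real number with 0 < R < 1 and let \epsilon, \delta be reals with 0 < \epsilon < 1/2 and 0 < \delta < 1/2. Then there exists m_0 such that for all m \ge m_0 the following holds. Set n = 2^m, let r be the least nonnegative integer with \sum_{i=0}^{r} \binom{m}{i} \ge R n, and for each a : Fin r \to F_2 let B_a = {v : (Fin m \to F_2) | v_i = a_i for all i \in Fin r} (a block of size 2^{m-r}; the 2^r blocks B_a partition (Fin m \to F_2)). Then for every integer w with \epsilon n \le w \le (1-\epsilon) n, the number of w-element subsets S of (Fin m \to F_2) such that |S \cap B_a| is even for every a : Fin r \to F_2 is at most (1/2 + \delta)^{2^r} \binom{n}{w}. -/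
/-!
Put `n = 2^m`, `ℓ = 2^r` and `A_T = ⋃_{a ∈ T} B_a`. Expanding `∏ₐ (1 + (-1)^|S ∩ B_a|)`, which
is `2^ℓ` if every intersection is even and `0` otherwise, gives
`2^ℓ · count = ∑_T ∑_{|S|=w} (-1)^|S ∩ A_T|`, and the inner sum is the Krawtchouk value
`[X^w] (1 - X)^j (1 + X)^(n-j)`, `j = |A_T|`. As `(1 - X)(1 + X) = 1 - X²`, this polynomial is
coefficientwise dominated by `(1 + X²)^t (1 + X)^(n-2t)` with `t = min j (n - j)`; evaluating at
`ρ = w/(n - w)`, where `C(n,w) ρ^w` is the largest term of `(1 + ρ)^n`, bounds it by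
`(n + 1) C(n,w) c^t` with `c = 1 - 2ε(1 - ε) < 1`. Blocks have `2^(m-r)` points, so
`t ≥ 2^(m-r) min(|T|, ℓ - |T|)` and `2^ℓ · count ≤ 2 (n + 1) C(n,w) (1 + c^(2^(m-r)))^ℓ`.

Since `∑_{i<k} C(m,i) ≤ (m + 1)^k = o(2^m)` for `k = O(log m)`, the minimality of `r` forces both
`m - r → ∞`, making `c^(2^(m-r)) ≤ δ`, and `2^r ≥ d (m + 1)`, making
`2 (n + 1) ≤ ((1 + 2δ)/(1 + δ))^ℓ`.
-/

open Finset Polynomial Filter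

lemma abs_coeff_mul_le_coeff_mul {p q p' q' : ℝ[X]} (hp : ∀ i, |p.coeff i| ≤ p'.coeff i)
    (hq : ∀ i, |q.coeff i| ≤ q'.coeff i) (k : ℕ) : |(p * q).coeff k| ≤ (p' * q').coeff k := by
  rw [coeff_mul, coeff_mul]
  refine (abs_sum_le_sum_abs _ _).trans (sum_le_sum fun ij _ => ?_)
  rw [abs_mul]
  exact mul_le_mul (hp _) (hq _) (abs_nonneg _) ((abs_nonneg _).trans (hp _))

lemma abs_coeff_pow_le_coeff_pow {p p' : ℝ[X]} (hp : ∀ i, |p.coeff i| ≤ p'.coeff i) (j : ℕ) :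
    ∀ i, |(p ^ j).coeff i| ≤ (p' ^ j).coeff i := by
  induction j with
  | zero => intro i; simp only [pow_zero, coeff_one]; split_ifs <;> norm_num
  | succ j ih => simpa only [pow_succ] using abs_coeff_mul_le_coeff_mul ih hp

lemma coeff_mul_pow_le_eval {q : ℝ[X]} (hq : ∀ i, 0 ≤ q.coeff i) {ρ : ℝ} (hρ : 0 ≤ ρ) (w : ℕ) :
    q.coeff w * ρ ^ w ≤ q.eval ρ := by
  rw [eval_eq_sum_range' (n := q.natDegree + w + 1) (by omega)]
  exact single_le_sum (f := fun i => q.coeff i * ρ ^ i)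
    (fun i _ => mul_nonneg (hq i) (pow_nonneg hρ _)) (mem_range.2 (by omega))

lemma abs_coeff_one_sub_X_pow_le (k i : ℕ) :
    |((1 - X ^ k : ℝ[X])).coeff i| ≤ ((1 + X ^ k : ℝ[X])).coeff i := by
  rw [coeff_sub, coeff_add, coeff_one, coeff_X_pow]
  split_ifs <;> norm_num

/-- `(1 - X²)ᵗ (1 - X)ᵈ (1 + X)ᵉ` is coefficientwise dominated by `(1 + X²)ᵗ (1 + X)ᵈ⁺ᵉ`. -/
lemma abs_coeff_mul_pow_le (t d e w : ℕ) {ρ : ℝ} (hρ : 0 ≤ ρ) :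
    |((1 - X ^ 2) ^ t * (1 - X) ^ d * (1 + X) ^ e : ℝ[X]).coeff w| * ρ ^ w
      ≤ (1 + ρ ^ 2) ^ t * (1 + ρ) ^ (d + e) := by
  have h1 : ∀ i, |((1 - X : ℝ[X])).coeff i| ≤ ((1 + X : ℝ[X])).coeff i := by
    simpa only [pow_one] using abs_coeff_one_sub_X_pow_le 1
  have h1' : ∀ i, |((1 + X : ℝ[X])).coeff i| ≤ ((1 + X : ℝ[X])).coeff i := fun i =>
    (abs_of_nonneg ((abs_nonneg _).trans (h1 i))).le
  have hdom := abs_coeff_mul_le_coeff_mul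
    (abs_coeff_mul_le_coeff_mul (abs_coeff_pow_le_coeff_pow (abs_coeff_one_sub_X_pow_le 2) t)
      (abs_coeff_pow_le_coeff_pow h1 d))
    (abs_coeff_pow_le_coeff_pow h1' e)
  calc _ ≤ ((1 + X ^ 2) ^ t * (1 + X) ^ d * (1 + X) ^ e : ℝ[X]).coeff w * ρ ^ w :=
        mul_le_mul_of_nonneg_right (hdom w) (pow_nonneg hρ w)
    _ ≤ _ := coeff_mul_pow_le_eval (fun i => (abs_nonneg _).trans (hdom i)) hρ w
    _ = _ := by simp [pow_add, mul_assoc]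

lemma apply_le_apply_of_unimodal {α : Type*} [Preorder α] {u : ℕ → α} {w n : ℕ} (hw : w ≤ n)
    (hup : ∀ k, k + 1 ≤ w → u k ≤ u (k + 1)) (hdown : ∀ k, w ≤ k → k + 1 ≤ n → u (k + 1) ≤ u k)
    (k : ℕ) (hk : k ≤ n) : u k ≤ u w := by
  rcases le_total k w with hkw | hwk
  · exact monotoneOn_of_le_add_one Set.ordConnected_Iic (fun i _ _ hi => hup i hi) hkw
      (Set.mem_Iic.2 le_rfl) hkw
  · exact antitoneOn_of_add_one_le Set.ordConnected_Icc (fun i _ hi hi1 => hdown i hi.1 hi1.2)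
      (Set.left_mem_Icc.2 hw) ⟨hwk, hk⟩ hwk

/-- The term `k = w` is the largest of the `n + 1` terms of `(w + (n - w))ⁿ`. -/
theorem pow_self_le_succ_mul_choose_mul_pow_mul_pow {n w : ℕ} (hw : w ≤ n) :
    n ^ n ≤ (n + 1) * (n.choose w * w ^ w * (n - w) ^ (n - w)) := by
  set u : ℕ → ℕ := fun k => n.choose k * w ^ k * (n - w) ^ (n - k) with hu
  have ratio : ∀ k < n, u (k + 1) * ((k + 1) * (n - w)) = u k * ((n - k) * w) := by
    intro k hk
    obtain ⟨j, rfl⟩ := Nat.exists_eq_add_of_lt hk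
    have hchoose := Nat.choose_succ_right_eq (k + j + 1) k
    simp only [hu, show k + j + 1 - (k + 1) = j by omega, show k + j + 1 - k = j + 1 by omega,
      pow_succ] at hchoose ⊢
    calc _ = (k + j + 1).choose (k + 1) * (k + 1) * (w ^ k * w * (k + j + 1 - w) ^ j
          * (k + j + 1 - w)) := by ring
      _ = _ := by rw [hchoose]; ring
  have hmax : ∀ k ∈ range (n + 1), u k ≤ u w := by
    refine fun k hk => apply_le_apply_of_unimodal hw (fun k hkw => ?_) (fun k hwk hkn => ?_) k
      (Nat.lt_succ_iff.1 (mem_range.1 hk))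
    · rcases Nat.eq_zero_or_pos (n - w) with hnw | hnw
      · simp [hu, hnw, zero_pow (show n - k ≠ 0 by omega)]
      · refine Nat.le_of_mul_le_mul_right ?_ (Nat.mul_pos k.succ_pos hnw)
        rw [ratio k (by omega)]
        exact Nat.mul_le_mul_left _ ((Nat.mul_le_mul hkw (by omega)).trans_eq (mul_comm _ _))
    · refine Nat.le_of_mul_le_mul_right ?_
        (Nat.mul_pos k.succ_pos (Nat.sub_pos_of_lt (show w < n by omega)))
      rw [ratio k (by omega)]
      exact Nat.mul_le_mul_left _
        ((Nat.mul_le_mul (show n - k ≤ n - w by omega) (show w ≤ k + 1 by omega)).trans_eq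
          (mul_comm _ _))
  calc n ^ n = (w + (n - w)) ^ n := by rw [Nat.add_sub_cancel' hw]
    _ = ∑ k ∈ range (n + 1), u k := by
      rw [add_pow]; exact sum_congr rfl fun k _ => by simp only [hu, Nat.cast_id]; ring
    _ ≤ ∑ k ∈ range (n + 1), u w := sum_le_sum hmax
    _ = _ := by rw [sum_const, card_range, smul_eq_mul]

theorem one_add_div_pow_le_succ_mul_choose_mul_div_pow {n w : ℕ} (hw : w < n) :
    (1 + (w : ℝ) / (n - w)) ^ n ≤ (n + 1) * n.choose w * ((w : ℝ) / (n - w)) ^ w := by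
  have hnw : (0 : ℝ) < n - w := by rw [sub_pos]; exact_mod_cast hw
  have hnat : (n : ℝ) ^ n ≤ (n + 1) * n.choose w * w ^ w * ((n : ℝ) - w) ^ (n - w) := by
    rw [← Nat.cast_sub hw.le]
    exact_mod_cast (pow_self_le_succ_mul_choose_mul_pow_mul_pow hw.le).trans_eq (by ring)
  have hpow : ((n : ℝ) - w) ^ n = ((n : ℝ) - w) ^ w * ((n : ℝ) - w) ^ (n - w) := by
    rw [← pow_add, Nat.add_sub_cancel' hw.le]
  rw [show 1 + (w : ℝ) / (n - w) = n / (n - w) by field_simp; ring, div_pow, div_pow,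
    div_le_iff₀ (by positivity), hpow]
  calc _ ≤ _ := hnat
    _ = _ := by field_simp

theorem abs_coeff_one_sub_X_pow_mul_one_add_X_pow_le {j k w : ℕ} (hw : w < j + k) {c : ℝ}
    (hc : (w : ℝ) ^ 2 + ((j + k : ℕ) - w) ^ 2 ≤ c * (j + k : ℕ) ^ 2) :
    |((1 - X) ^ j * (1 + X) ^ k : ℝ[X]).coeff w|
      ≤ ((j + k : ℕ) + 1) * (j + k).choose w * c ^ min j k := by
  set n := j + k
  set t := min j k
  have hnw : (0 : ℝ) < n - w := by rw [sub_pos]; exact_mod_cast hw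
  have hc0 : 0 ≤ c := by nlinarith [sq_nonneg (w : ℝ), mul_pos hnw hnw]
  set ρ : ℝ := w / (n - w) with hρ
  have hρ0 : 0 ≤ ρ := div_nonneg (Nat.cast_nonneg w) hnw.le
  have hρw : 0 < ρ ^ w := by
    rcases Nat.eq_zero_or_pos w with rfl | hw0
    · simp
    · exact pow_pos (div_pos (by exact_mod_cast hw0) hnw) w
  have hsplit : ((1 - X) ^ j * (1 + X) ^ k : ℝ[X])
      = (1 - X ^ 2) ^ t * (1 - X) ^ (j - t) * (1 + X) ^ (k - t) := by
    have hj : j = t + (j - t) := by omega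
    have hk : k = t + (k - t) := by omega
    calc ((1 - X) ^ j * (1 + X) ^ k : ℝ[X])
        = (1 - X) ^ (t + (j - t)) * (1 + X) ^ (t + (k - t)) := by rw [← hj, ← hk]
      _ = _ := by rw [show (1 - X ^ 2 : ℝ[X]) = (1 - X) * (1 + X) by ring, mul_pow]; ring
  have hdom := abs_coeff_mul_pow_le t (j - t) (k - t) w hρ0
  rw [← hsplit, show j - t + (k - t) = n - 2 * t by omega] at hdom
  -- with this `ρ`, `(1 + ρ²) / (1 + ρ)² = (w² + (n - w)²) / n²`
  have hsq : 1 + ρ ^ 2 ≤ c * (1 + ρ) ^ 2 := by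
    have : c * (1 + ρ) ^ 2 - (1 + ρ ^ 2) = (c * n ^ 2 - (w ^ 2 + (n - w) ^ 2)) / (n - w) ^ 2 := by
      rw [hρ]; field_simp; ring
    exact sub_nonneg.1 (this ▸ div_nonneg (by linarith) (by positivity))
  refine le_of_mul_le_mul_right ?_ hρw
  calc _ ≤ (1 + ρ ^ 2) ^ t * (1 + ρ) ^ (n - 2 * t) := hdom
    _ ≤ (c * (1 + ρ) ^ 2) ^ t * (1 + ρ) ^ (n - 2 * t) := by gcongr
    _ = c ^ t * (1 + ρ) ^ n := by
      rw [mul_pow, ← pow_mul, mul_assoc, ← pow_add, show 2 * t + (n - 2 * t) = n by omega]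
    _ ≤ c ^ t * ((n + 1) * n.choose w * ρ ^ w) := by
      gcongr; exact one_add_div_pow_le_succ_mul_choose_mul_div_pow hw
    _ = _ := by ring

theorem sum_powersetCard_neg_one_pow_card_filter {V : Type*} [Fintype V] (p : V → Prop)
    [DecidablePred p] (w : ℕ) :
    ∑ S ∈ powersetCard w (univ : Finset V), (-1 : ℝ) ^ #{v ∈ S | p v}
      = ((1 - X) ^ #{v | p v} * (1 + X) ^ #{v | ¬p v} : ℝ[X]).coeff w := by
  let g : V → ℝ[X] := fun v => if p v then -X else X
  have hterm : ∀ S : Finset V, ∏ v ∈ S, g v = C ((-1 : ℝ) ^ #{v ∈ S | p v}) * X ^ #S := by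
    intro S
    rw [prod_ite, prod_const, prod_const, neg_pow, C_pow, C_neg, C_1, mul_assoc, ← pow_add,
      card_filter_add_card_filter_not]
  have hprod : ∏ v, (1 + g v) = (1 - X) ^ #{v | p v} * (1 + X) ^ #{v | ¬p v} := by
    rw [prod_apply_ite (s := univ) (fun _ => -X) (fun _ => X) (1 + ·), prod_const, prod_const,
      sub_eq_add_neg]
  rw [← hprod, prod_one_add, finsetSum_coeff, powerset_univ]
  simp only [hterm, coeff_C_mul_X_pow, powersetCard_eq_filter, powerset_univ, sum_filter]
  exact sum_congr rfl fun S _ => by split_ifs <;> simp_all [eq_comm]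

lemma one_add_neg_one_pow (n : ℕ) : 1 + (-1 : ℝ) ^ n = if Even n then 2 else 0 := by
  split_ifs with h
  · rw [h.neg_one_pow]; norm_num
  · rw [(Nat.not_even_iff_odd.1 h).neg_one_pow]; norm_num

theorem card_filter_forall_even_mul_two_pow {V ι : Type*} [Fintype ι] [DecidableEq ι]
    (𝒮 : Finset (Finset V)) (f : V → ι) :
    (#{S ∈ 𝒮 | ∀ a, Even #{v ∈ S | f v = a}} : ℝ) * 2 ^ Fintype.card ι
      = ∑ T : Finset ι, ∑ S ∈ 𝒮, (-1 : ℝ) ^ #{v ∈ S | f v ∈ T} := by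
  have hS : ∀ S : Finset V, ∑ T : Finset ι, (-1 : ℝ) ^ #{v ∈ S | f v ∈ T}
      = if ∀ a, Even #{v ∈ S | f v = a} then 2 ^ Fintype.card ι else 0 := by
    intro S
    simp_rw [← sum_card_fiberwise_eq_card_filter, ← prod_pow_eq_pow_sum, ← powerset_univ,
      ← prod_one_add, one_add_neg_one_pow, prod_ite_zero, prod_const, card_univ, mem_univ,
      true_implies]
  rw [sum_comm, sum_congr rfl fun S _ => hS S, sum_ite, sum_const_zero, add_zero, sum_const,
    nsmul_eq_mul]

lemma mul_card_le_card_filter_mem {V ι : Type*} [Fintype V] [DecidableEq ι] {f : V → ι} {b : ℕ}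
    (hb : ∀ a, b ≤ #{v | f v = a}) (T : Finset ι) : b * #T ≤ #{v | f v ∈ T} := by
  rw [← sum_card_fiberwise_eq_card_filter, mul_comm, ← smul_eq_mul]
  exact card_nsmul_le_sum _ _ _ fun a _ => hb a

theorem abs_sum_powersetCard_neg_one_pow_card_filter_mem_le {V ι : Type*} [Fintype V]
    [Fintype ι] [DecidableEq ι] {f : V → ι} {b w : ℕ}
    (hb : ∀ a, b ≤ #{v | f v = a}) (hw : w < Fintype.card V) {c : ℝ} (hc1 : c ≤ 1)
    (hc : (w : ℝ) ^ 2 + (Fintype.card V - w) ^ 2 ≤ c * Fintype.card V ^ 2) (T : Finset ι) :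
    |∑ S ∈ powersetCard w univ, (-1 : ℝ) ^ #{v ∈ S | f v ∈ T}|
      ≤ (Fintype.card V + 1) * (Fintype.card V).choose w
        * ((c ^ b) ^ #T + (c ^ b) ^ (Fintype.card ι - #T)) := by
  have hjk : #{v | f v ∈ T} + #{v | f v ∉ T} = Fintype.card V := card_filter_add_card_filter_not _
  have hkraw := abs_coeff_one_sub_X_pow_mul_one_add_X_pow_le (hjk ▸ hw) (hjk ▸ hc)
  rw [hjk] at hkraw
  have hj := mul_card_le_card_filter_mem hb T
  have hk := mul_card_le_card_filter_mem hb Tᶜ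
  simp only [mem_compl, card_compl] at hk
  have hc0 : 0 ≤ c := by
    have hnw : (0 : ℝ) < Fintype.card V - w := by rw [sub_pos]; exact_mod_cast hw
    nlinarith [sq_nonneg (w : ℝ), mul_pos hnw hnw]
  rw [sum_powersetCard_neg_one_pow_card_filter]
  refine hkraw.trans (mul_le_mul_of_nonneg_left ?_ (by positivity))
  set ℓ := Fintype.card ι
  calc c ^ min #{v | f v ∈ T} #{v | f v ∉ T} ≤ c ^ (b * min #T (ℓ - #T)) :=
        pow_le_pow_of_le_one hc0 hc1 (le_min ((Nat.mul_le_mul_left b (min_le_left _ _)).trans hj)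
          ((Nat.mul_le_mul_left b (min_le_right _ _)).trans hk))
    _ = (c ^ b) ^ min #T (ℓ - #T) := pow_mul c b _
    _ ≤ _ := by
      rcases min_choice #T (ℓ - #T) with h | h <;> rw [h] <;> simp [pow_nonneg, hc0]

theorem card_filter_forall_even_mul_two_pow_le {V ι : Type*} [Fintype V] [Fintype ι]
    [DecidableEq ι] (f : V → ι) {b w : ℕ} (hb : ∀ a, b ≤ #{v | f v = a})
    (hw : w < Fintype.card V) {c : ℝ} (hc1 : c ≤ 1)
    (hc : (w : ℝ) ^ 2 + (Fintype.card V - w) ^ 2 ≤ c * Fintype.card V ^ 2) :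
    (#{S ∈ powersetCard w univ | ∀ a, Even #{v ∈ S | f v = a}} : ℝ) * 2 ^ Fintype.card ι
      ≤ (Fintype.card V + 1) * (Fintype.card V).choose w * (2 * (1 + c ^ b) ^ Fintype.card ι) := by
  have h1 := sum_pow_mul_eq_add_pow (c ^ b) 1 (univ : Finset ι)
  have h2 := sum_pow_mul_eq_add_pow 1 (c ^ b) (univ : Finset ι)
  simp only [one_pow, mul_one, one_mul, powerset_univ, card_univ] at h1 h2
  have hsum : (Fintype.card V + 1) * (Fintype.card V).choose w * (2 * (1 + c ^ b) ^ Fintype.card ι)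
      = ∑ T : Finset ι, (Fintype.card V + 1) * (Fintype.card V).choose w
          * ((c ^ b) ^ #T + (c ^ b) ^ (Fintype.card ι - #T)) := by
    rw [← mul_sum, sum_add_distrib, h1, h2]; ring
  rw [card_filter_forall_even_mul_two_pow, hsum]
  exact sum_le_sum fun T _ => (le_abs_self _).trans
    (abs_sum_powersetCard_neg_one_pow_card_filter_mem_le hb hw hc1 hc T)

theorem card_filter_comp_eq {α ι κ : Type*} [AddCommGroup α] [Fintype α] [DecidableEq α]
    [Fintype ι] [DecidableEq ι] [Fintype κ] [DecidableEq κ] {g : ι → κ}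
    (hg : Function.Injective g) (a : ι → α) :
    #{v : κ → α | v ∘ g = a} = Fintype.card α ^ (Fintype.card κ - Fintype.card ι) := by
  let φ := (LinearMap.funLeft ℕ α g).toAddMonoidHom
  have hφ : Function.Surjective φ := LinearMap.funLeft_surjective_of_injective ℕ α g hg
  have hfib : ∀ b, #{v | φ v = b} = #{v | φ v = a} := fun b =>
    AddMonoidHom.card_fiber_eq_of_mem_range φ (hφ b) (hφ a)
  have htotal : Fintype.card α ^ Fintype.card κ
      = Fintype.card α ^ Fintype.card ι * #{v | φ v = a} := by
    rw [← Fintype.card_fun, ← card_univ, card_eq_sum_card_fiberwise (t := univ) (f := φ)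
      (fun _ _ => mem_coe.2 (mem_univ _)), sum_congr rfl fun b _ => hfib b, sum_const,
      card_univ, Fintype.card_fun, smul_eq_mul]
  have hle : Fintype.card ι ≤ Fintype.card κ := Fintype.card_le_of_injective g hg
  rw [← Nat.sub_add_cancel hle, pow_add, mul_comm] at htotal
  exact (Nat.eq_of_mul_eq_mul_left (pow_pos Fintype.card_pos _) htotal).symm

theorem card_filter_forall_even_card_inter_block_mul_two_pow_le {m r : ℕ} (hrm : r ≤ m) {w : ℕ}
    {ε : ℝ} (hε : 0 < ε) (hw1 : ε * 2 ^ m ≤ w) (hw2 : (w : ℝ) ≤ (1 - ε) * 2 ^ m) :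
    (((powersetCard w (univ : Finset (Fin m → ZMod 2))).filter
        fun S => ∀ a : Fin r → ZMod 2, Even (S ∩ (univ.filter
          fun v : Fin m → ZMod 2 => ∀ i : Fin r, v (Fin.castLE hrm i) = a i)).card).card : ℝ)
        * 2 ^ 2 ^ r
      ≤ (2 ^ m + 1) * (2 ^ m).choose w
        * (2 * (1 + (1 - 2 * ε * (1 - ε)) ^ 2 ^ (m - r)) ^ 2 ^ r) := by
  have hblocks : ∀ a : Fin r → ZMod 2,
      2 ^ (m - r) ≤ #{v : Fin m → ZMod 2 | v ∘ Fin.castLE hrm = a} :=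
    fun a => by simp [card_filter_comp_eq (Fin.castLE_injective hrm) a]
  have hcard : Fintype.card (Fin m → ZMod 2) = 2 ^ m := by simp
  have hw : w < 2 ^ m := by
    have : (w : ℝ) < 2 ^ m := by nlinarith [pow_pos (two_pos (α := ℝ)) m]
    exact_mod_cast this
  have hc : (w : ℝ) ^ 2 + ((2 ^ m : ℕ) - w) ^ 2 ≤ (1 - 2 * ε * (1 - ε)) * (2 ^ m : ℕ) ^ 2 := by
    push_cast
    nlinarith [mul_nonneg (sub_nonneg.2 hw1) (sub_nonneg.2 hw2)]
  have h1ε : 0 < 1 - ε := by nlinarith [pow_pos (two_pos (α := ℝ)) m]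
  have hbound := card_filter_forall_even_mul_two_pow_le _ hblocks (hcard ▸ hw)
    (by nlinarith [mul_pos hε h1ε]) (hcard ▸ hc)
  rw [hcard, Fintype.card_fun, Fintype.card_fin, ZMod.card] at hbound
  push_cast at hbound
  simpa only [inter_filter, inter_univ, funext_iff, Function.comp_apply] using hbound

lemma eventually_add_sq_lt_two_pow (c : ℕ) : ∀ᶠ s : ℕ in atTop, (s + c) ^ 2 < 2 ^ s := by
  have hc : (0 : ℝ) < 1 / (2 * (c + 1) ^ 2) := by positivity
  filter_upwards [(isLittleO_pow_const_const_pow_of_one_lt (R := ℝ) 2 one_lt_two).bound hc,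
    eventually_ge_atTop 1] with s hs hs1
  simp only [Real.norm_eq_abs, abs_pow, Nat.abs_cast, abs_two] at hs
  have hs1' : (1 : ℝ) ≤ s := by exact_mod_cast hs1
  have : ((s + c : ℕ) : ℝ) ^ 2 < 2 ^ s := by
    calc ((s + c : ℕ) : ℝ) ^ 2 ≤ (((c : ℝ) + 1) * s) ^ 2 := by push_cast; gcongr; nlinarith
      _ = ((c : ℝ) + 1) ^ 2 * (s : ℝ) ^ 2 := by ring
      _ ≤ ((c : ℝ) + 1) ^ 2 * (1 / (2 * ((c : ℝ) + 1) ^ 2) * 2 ^ s) := by gcongr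
      _ = 2 ^ s / 2 := by field_simp
      _ < 2 ^ s := by linarith [pow_pos (two_pos (α := ℝ)) s]
  exact_mod_cast this

lemma eventually_two_pow_mul_succ_pow_lt (a e : ℕ) :
    ∀ᶠ m : ℕ in atTop, ∀ k, 2 ^ k ≤ a * (m + 1) → 2 ^ e * (m + 1) ^ k < 2 ^ m := by
  obtain ⟨s₀, hs₀⟩ := eventually_atTop.1 (eventually_add_sq_lt_two_pow (a + e + 1))
  filter_upwards [eventually_ge_atTop (2 ^ s₀)] with m hm k hk
  set s := Nat.log 2 (m + 1)
  have hs_le : 2 ^ s ≤ m + 1 := Nat.pow_log_le_self 2 m.succ_ne_zero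
  have hm_lt : m + 1 < 2 ^ (s + 1) := Nat.lt_pow_succ_log_self one_lt_two _
  have hs : s₀ ≤ s := Nat.le_log_of_pow_le one_lt_two (by omega)
  have hk : k ≤ a + s := by
    have : 2 ^ k < 2 ^ (a + (s + 1)) := by
      rw [pow_add]
      calc 2 ^ k ≤ a * (m + 1) := hk
        _ < 2 ^ a * 2 ^ (s + 1) := Nat.mul_lt_mul'' a.lt_two_pow_self hm_lt
    have := (Nat.pow_lt_pow_iff_right (by norm_num)).1 this
    omega
  calc 2 ^ e * (m + 1) ^ k ≤ 2 ^ e * (2 ^ (s + 1)) ^ (a + s) := by gcongr; omega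
    _ = 2 ^ (e + (s + 1) * (a + s)) := by rw [← pow_mul, ← pow_add]
    _ < 2 ^ m := by
      apply Nat.pow_lt_pow_right one_lt_two
      have := hs₀ s hs
      nlinarith

lemma eventually_succ_pow_lt (a : ℕ) {C : ℝ} (hC : 0 < C) :
    ∀ᶠ m : ℕ in atTop, ∀ k, 2 ^ k ≤ a * (m + 1) → ((m : ℝ) + 1) ^ k < C * 2 ^ m := by
  obtain ⟨e, he⟩ := pow_unbounded_of_one_lt C⁻¹ one_lt_two
  filter_upwards [eventually_two_pow_mul_succ_pow_lt a e] with m hm k hk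
  have hlt : (2 : ℝ) ^ e * ((m : ℝ) + 1) ^ k < 2 ^ m := by exact_mod_cast hm k hk
  have : 1 ≤ C * 2 ^ e := by rw [inv_lt_iff_one_lt_mul₀ hC] at he; linarith
  nlinarith [pow_pos (two_pos (α := ℝ)) m, pow_nonneg (by positivity : (0 : ℝ) ≤ m + 1) k]

lemma sum_range_choose_le_succ_pow (m k : ℕ) : ∑ i ∈ range k, m.choose i ≤ (m + 1) ^ k := by
  calc ∑ i ∈ range k, m.choose i ≤ ∑ i ∈ range (k + 1), m ^ i * 1 ^ (k - i) * k.choose i := by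
        refine (sum_le_sum fun i hi => ?_).trans
          (sum_le_sum_of_subset (range_subset_range.2 k.le_succ))
        rw [one_pow, mul_one]
        exact (m.choose_le_pow i).trans
          (Nat.le_mul_of_pos_right _ (Nat.choose_pos (mem_range.1 hi).le))
    _ = (m + 1) ^ k := (add_pow _ _ _).symm

lemma two_pow_le_sum_range_choose_add {m K : ℕ} (hK : K ≤ m + 1) :
    2 ^ m ≤ ∑ i ∈ range (m + 1 - K), m.choose i + (m + 1) ^ K := by
  have htail : ∑ i ∈ Ico (m + 1 - K) (m + 1), m.choose i = ∑ i ∈ range K, m.choose i := by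
    have := sum_Ico_reflect (m.choose ·) 0 hK
    rw [Nat.sub_zero] at this
    rw [← this, range_eq_Ico]
    exact sum_congr rfl fun i hi => Nat.choose_symm (by have := (mem_Ico.1 hi).2; omega)
  rw [← Nat.sum_range_choose, ← sum_range_add_sum_Ico _ (Nat.sub_le _ _), htail]
  exact Nat.add_le_add_left (sum_range_choose_le_succ_pow m K) _

lemma eventually_isLeast_sum_choose_add_le {R : ℝ} (hR1 : R < 1) (K : ℕ) :
    ∀ᶠ m : ℕ in atTop, ∀ r, IsLeast {k : ℕ | R * 2 ^ m ≤ ∑ i ∈ range (k + 1), (m.choose i : ℝ)} r →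
      r + K ≤ m := by
  filter_upwards [eventually_succ_pow_lt (2 ^ K) (sub_pos.2 hR1), eventually_ge_atTop K]
    with m hsmall hKm r hr
  have htail : ((m : ℝ) + 1) ^ K < (1 - R) * 2 ^ m :=
    hsmall K (Nat.le_mul_of_pos_right _ m.succ_pos)
  have hsum : (2 : ℝ) ^ m ≤ ∑ i ∈ range (m - K + 1), (m.choose i : ℝ) + ((m : ℝ) + 1) ^ K := by
    rw [show m - K + 1 = m + 1 - K by omega]
    exact_mod_cast two_pow_le_sum_range_choose_add (m := m) (by omega)
  have := hr.2 (show R * 2 ^ m ≤ ∑ i ∈ range (m - K + 1), (m.choose i : ℝ) by linarith)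
  omega

lemma eventually_isLeast_sum_choose_le_two_pow {R : ℝ} (hR0 : 0 < R) (d : ℕ) :
    ∀ᶠ m : ℕ in atTop, ∀ r, IsLeast {k : ℕ | R * 2 ^ m ≤ ∑ i ∈ range (k + 1), (m.choose i : ℝ)} r →
      d * (m + 1) ≤ 2 ^ r := by
  filter_upwards [eventually_succ_pow_lt (2 * d) hR0] with m hsmall r hr
  by_contra! h
  have hsum : R * 2 ^ m ≤ ((m : ℝ) + 1) ^ (r + 1) :=
    hr.1.trans (by exact_mod_cast sum_range_choose_le_succ_pow m (r + 1))
  have := hsmall (r + 1)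
    (by rw [pow_succ, mul_assoc, mul_comm 2]; exact Nat.mul_le_mul_right 2 h.le)
  linarith

lemma two_mul_two_pow_add_one_le_pow {q : ℝ} (hq : 1 ≤ q) {d m ℓ : ℕ} (hd : 4 ≤ q ^ d)
    (hℓ : d * (m + 1) ≤ ℓ) : 2 * ((2 : ℝ) ^ m + 1) ≤ q ^ ℓ :=
  calc 2 * ((2 : ℝ) ^ m + 1) ≤ 4 ^ (m + 1) := by
        have := pow_le_pow_left₀ (by norm_num) (show (2 : ℝ) ≤ 4 by norm_num) m
        have := one_le_pow₀ (M₀ := ℝ) (show 1 ≤ 2 by norm_num) (n := m)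
        rw [pow_succ]; linarith
    _ ≤ (q ^ d) ^ (m + 1) := pow_le_pow_left₀ (by norm_num) hd _
    _ = q ^ (d * (m + 1)) := (pow_mul _ _ _).symm
    _ ≤ q ^ ℓ := pow_le_pow_right₀ hq hℓ

theorem rm_block_even_intersection_bound_general (R ε δ : ℝ)
    (hR0 : 0 < R) (hR1 : R < 1)
    (hε0 : 0 < ε) (hε : ε < 1 / 2) (hδ0 : 0 < δ) :
    ∃ m₀ : ℕ, ∀ m : ℕ, m₀ ≤ m → ∀ (r : ℕ) (hrm : r ≤ m),
      IsLeast {k : ℕ | R * 2 ^ m ≤ ∑ i ∈ Finset.range (k + 1), (m.choose i : ℝ)} r →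
      ∀ w : ℕ, ε * 2 ^ m ≤ w → (w : ℝ) ≤ (1 - ε) * 2 ^ m →
      (((Finset.powersetCard w (Finset.univ : Finset (Fin m → ZMod 2))).filter
          fun S => ∀ a : Fin r → ZMod 2,
            Even ((S ∩ (Finset.univ.filter
              fun v : Fin m → ZMod 2 => ∀ i : Fin r, v (Fin.castLE hrm i) = a i)).card)).card : ℝ)
        ≤ (1 / 2 + δ) ^ (2 ^ r) * ((2 ^ m).choose w) := by
  set c : ℝ := 1 - 2 * ε * (1 - ε)
  set q : ℝ := (1 + 2 * δ) / (1 + δ)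
  have hc0 : 0 ≤ c := by nlinarith
  have hc1 : c < 1 := by nlinarith
  have hq : 1 < q := by rw [one_lt_div (by linarith)]; linarith
  obtain ⟨K, hK⟩ := exists_pow_lt_of_lt_one hδ0 hc1
  obtain ⟨d, hd⟩ := pow_unbounded_of_one_lt 4 hq
  obtain ⟨m₀, hm₀⟩ := eventually_atTop.1 ((eventually_isLeast_sum_choose_add_le hR1 K).and
    (eventually_isLeast_sum_choose_le_two_pow hR0 d))
  refine ⟨m₀, fun m hm r hrm hr w hw1 hw2 => ?_⟩
  have hrK : K ≤ m - r := by have := (hm₀ m hm).1 r hr; omega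
  have hsmall : c ^ 2 ^ (m - r) ≤ δ :=
    (pow_le_pow_of_le_one hc0 hc1.le (hrK.trans Nat.lt_two_pow_self.le)).trans hK.le
  have hlarge := two_mul_two_pow_add_one_le_pow hq.le hd.le ((hm₀ m hm).2 r hr)
  refine le_of_mul_le_mul_right
    ((card_filter_forall_even_card_inter_block_mul_two_pow_le hrm hε0 hw1 hw2).trans ?_)
    (by positivity : (0 : ℝ) < 2 ^ 2 ^ r)
  calc _ = ((2 ^ m).choose w : ℝ) * (2 * ((2 : ℝ) ^ m + 1) * (1 + c ^ 2 ^ (m - r)) ^ 2 ^ r) := by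
        ring
    _ ≤ ((2 ^ m).choose w : ℝ) * (q ^ 2 ^ r * (1 + δ) ^ 2 ^ r) := by gcongr
    _ = _ := by
      rw [← mul_pow, show q * (1 + δ) = (1 / 2 + δ) * 2 by simp only [q]; field_simp, mul_pow]
      ring

/-- Let `0 < R < 1`, `0 < ε < 1/2`, `0 < δ < 1/2`. Then there is `m₀` such
that for all `m ≥ m₀`, with `n = 2^m` and `r` the least nonnegative integer with
`∑_{i=0}^{r} C(m,i) ≥ R n` (so `r ≤ m`), and with blocks
`B_a = {v : Fin m → F₂ | ∀ i : Fin r, v i = a i}` for `a : Fin r → F₂`, the number of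
`w`-element subsets `S` of `Fin m → F₂` with `|S ∩ B_a|` even for every `a` is at most
`(1/2 + δ)^(2^r) C(n, w)`, for every `w` with `εn ≤ w ≤ (1-ε)n`. -/
theorem rm_block_even_intersection_bound (R ε δ : ℝ)
    (hR0 : 0 < R) (hR1 : R < 1)
    (hε0 : 0 < ε) (hε : ε < 1 / 2) (hδ0 : 0 < δ) (hδ : δ < 1 / 2) :
    ∃ m₀ : ℕ, ∀ m : ℕ, m₀ ≤ m → ∀ (r : ℕ) (hrm : r ≤ m),
      IsLeast {k : ℕ | R * 2 ^ m ≤ ∑ i ∈ Finset.range (k + 1), (m.choose i : ℝ)} r →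
      ∀ w : ℕ, ε * 2 ^ m ≤ w → (w : ℝ) ≤ (1 - ε) * 2 ^ m →
      (((Finset.powersetCard w (Finset.univ : Finset (Fin m → ZMod 2))).filter
          fun S => ∀ a : Fin r → ZMod 2,
            Even ((S ∩ (Finset.univ.filter
              fun v : Fin m → ZMod 2 => ∀ i : Fin r, v (Fin.castLE hrm i) = a i)).card)).card : ℝ)
        ≤ (1 / 2 + δ) ^ (2 ^ r) * ((2 ^ m).choose w) :=
  rm_block_even_intersection_bound_general R ε δ hR0 hR1 hε0 hε hδ0
end

section
/- Let m \ge 1 and let r be an integer with 0 \le r \le m - 1. Let f : (Fin m \to F_2) \to F_2 lie in the F_2-linear span of the monomial functions e_S(v) = \prod_{i \in S} v_i over subsets S with |S| \le r, and let g lie in the corresponding span over subsets S with |S| \le m - r - 1. Then \sum_{v \in (Fin m \to F_2)} f(v) \cdot g(v) = 0 in F_2. -/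
/-!
Over `𝔽₂` every element is idempotent, so the product of the monomials `x^S` and `x^T` is the
monomial `x^(S ∪ T)`. Hence `f * g` lies in the span of monomials of degree at most
`r + (m - r - 1) < m`, and each such monomial sums to zero over `𝔽₂^m`: a variable `x_j` missing
from it contributes a factor `∑_{x ∈ 𝔽₂} 1 = 2 = 0`.
-/

open Finset
open scoped Pointwise

theorem Finset.prod_mul_prod_eq_prod_union_of_isIdempotentElem {ι M : Type*} [CommMonoid M]
    [DecidableEq ι] {f : ι → M} (hf : ∀ i, IsIdempotentElem (f i)) (S T : Finset ι) :
    (∏ i ∈ S, f i) * ∏ i ∈ T, f i = ∏ i ∈ S ∪ T, f i := by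
  have hidem : IsIdempotentElem (∏ i ∈ S ∩ T, f i) :=
    prod_induction f IsIdempotentElem (fun _ _ => IsIdempotentElem.mul) .one fun i _ => hf i
  rw [← prod_union_inter, ← prod_sdiff inter_subset_union, mul_assoc, hidem.eq]

def monomialFns (ι R : Type*) [CommMonoid R] (k : ℕ) : Set ((ι → R) → R) :=
  {h | ∃ S : Finset ι, S.card ≤ k ∧ h = fun v => ∏ i ∈ S, v i}

theorem monomialFns_mul_subset {ι R : Type*} [CommMonoid R] (hR : ∀ x : R, IsIdempotentElem x)
    (a b : ℕ) :
    monomialFns ι R a * monomialFns ι R b ⊆ monomialFns ι R (a + b) := by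
  classical
  rintro _ ⟨_, ⟨S, hS, rfl⟩, _, ⟨T, hT, rfl⟩, rfl⟩
  refine ⟨S ∪ T, (card_union_le S T).trans (add_le_add hS hT), funext fun v => ?_⟩
  exact prod_mul_prod_eq_prod_union_of_isIdempotentElem (fun i => hR (v i)) S T

section

variable {ι R : Type*} [CommRing R] [Fintype ι] [DecidableEq ι] [Fintype R]

theorem sum_prod_eq_zero_of_ne_univ {U : Finset ι} (hU : U ≠ univ) :
    ∑ v : ι → R, ∏ i ∈ U, v i = 0 := by
  obtain ⟨j, hj⟩ : ∃ j, j ∉ U := by simpa [eq_univ_iff_forall] using hU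
  calc ∑ v : ι → R, ∏ i ∈ U, v i
      = ∑ v : ι → R, ∏ i, if i ∈ U then v i else 1 := by simp only [prod_ite_mem, univ_inter]
    _ = ∏ i, ∑ x : R, if i ∈ U then x else 1 :=
        (Fintype.prod_sum fun i (x : R) => if i ∈ U then x else 1).symm
    _ = 0 := prod_eq_zero (mem_univ j) (by simp [hj, Nat.cast_card_eq_zero])

theorem sum_eq_zero_of_mem_span_monomialFns {k : ℕ} (hk : k < Fintype.card ι)
    {h : (ι → R) → R} (hh : h ∈ Submodule.span R (monomialFns ι R k)) :
    ∑ v, h v = 0 := by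
  induction hh using Submodule.span_induction with
  | mem h hmono =>
    obtain ⟨U, hU, rfl⟩ := hmono
    refine sum_prod_eq_zero_of_ne_univ fun hUuniv => ?_
    rw [hUuniv, card_univ] at hU
    omega
  | zero => simp
  | add h₁ h₂ _ _ ih₁ ih₂ => simp only [Pi.add_apply, sum_add_distrib, ih₁, ih₂, add_zero]
  | smul c h _ ih => simp only [Pi.smul_apply, smul_eq_mul, ← mul_sum, ih, mul_zero]

end

/-- For `m ≥ 1` and `0 ≤ r ≤ m - 1`, if `f ∈ RM(r, m)` and
`g ∈ RM(m-r-1, m)` (spans of monomials of degree `≤ r`, resp. `≤ m-r-1`), then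
`∑_v f(v) g(v) = 0` in `F₂`. -/
theorem rm_orthogonality (m r : ℕ) (hm : 1 ≤ m) (hr : r ≤ m - 1)
    (f g : (Fin m → ZMod 2) → ZMod 2)
    (hf : f ∈ Submodule.span (ZMod 2)
      {h : (Fin m → ZMod 2) → ZMod 2 |
        ∃ S : Finset (Fin m), S.card ≤ r ∧ h = fun v => ∏ i ∈ S, v i})
    (hg : g ∈ Submodule.span (ZMod 2)
      {h : (Fin m → ZMod 2) → ZMod 2 |
        ∃ S : Finset (Fin m), S.card ≤ m - r - 1 ∧ h = fun v => ∏ i ∈ S, v i}) :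
    ∑ v : Fin m → ZMod 2, f v * g v = 0 := by
  have hidem : ∀ x : ZMod 2, IsIdempotentElem x := fun x => by fin_cases x <;> rfl
  have hfg : f * g ∈ Submodule.span (ZMod 2) (monomialFns (Fin m) (ZMod 2) (r + (m - r - 1))) := by
    have hmul := Submodule.mul_mem_mul hf hg
    rw [Submodule.span_mul_span] at hmul
    exact Submodule.span_mono (monomialFns_mul_subset hidem r (m - r - 1)) hmul
  exact sum_eq_zero_of_mem_span_monomialFns (by rw [Fintype.card_fin]; omega) hfg
end
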